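/- Let Φ ∈ ℂ^{N×R} (R ≤ N) have full column rank, and define the kernel matrices Ψx = Φ Φ* and Ψy = Ψ'Φ* for some Ψ' ∈ ℂ^{N×R}. If K ∈ ℂ^{N×N} satisfies Ψx K = Ψy, then K_RFF := Φ* K (Φ*)† satisfies Φ* Φ K_RFF = Φ* Ψ'. -/

import Mathlib

open Matrix

/-!
Full column rank makes `Φ` left-cancellable, and two of the Penrose conditions for `A = Φ*`,
namely `A P A = A` and `(A P)* = A P`, give `Φ (Φ* P) = Φ`; hence `Φ* P = I`, i.e. the
pseudoinverse of `Φ*` is a right inverse. Substituting `Φ Φ* K = Ψ' Φ*` into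
`Φ* Φ (Φ* K P)` then leaves `Φ* Ψ' (Φ* P) = Φ* Ψ'`.
-/

def IsMoorePenroseInverse {N R : ℕ} (A : Matrix (Fin N) (Fin R) ℂ)
    (P : Matrix (Fin R) (Fin N) ℂ) : Prop :=
  A * P * A = A ∧ P * A * P = P ∧ (A * P)ᴴ = A * P ∧ (P * A)ᴴ = P * A

namespace Matrix

variable {l m n R : Type*} [Fintype n] [CommRing R]

theorem mul_right_injective_of_linearIndependent_col {A : Matrix m n R}
    (hA : LinearIndependent R A.col) : Function.Injective (fun B : Matrix n l R => A * B) :=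
  fun _ _ h => ext_col fun j => mulVec_injective_iff.mpr hA congr(($h).col j)

theorem conjTranspose_mul_mul_eq_of_penrose [StarRing R] [Fintype m] {A : Matrix m n R}
    {P : Matrix m n R} (h₁ : Aᴴ * P * Aᴴ = Aᴴ) (h₃ : (Aᴴ * P)ᴴ = Aᴴ * P) :
    A * (Aᴴ * P) = A := by
  simpa only [conjTranspose_mul, conjTranspose_conjTranspose, h₃] using congr(($h₁)ᴴ)

theorem conjTranspose_mul_eq_one_of_penrose [StarRing R] [Fintype m] [DecidableEq n]
    {A : Matrix m n R} (hA : LinearIndependent R A.col) {P : Matrix m n R}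
    (h₁ : Aᴴ * P * Aᴴ = Aᴴ) (h₃ : (Aᴴ * P)ᴴ = Aᴴ * P) : Aᴴ * P = 1 :=
  mul_right_injective_of_linearIndependent_col hA <| by
    simpa only [Matrix.mul_one] using conjTranspose_mul_mul_eq_of_penrose h₁ h₃

end Matrix

/-- If `Φ` has full column rank, `Ψx = Φ Φ*`, `Ψy = Ψ' Φ*`, and `Ψx K = Ψy`, then
`K_RFF := Φ* K (Φ*)†` satisfies the normal equation `Φ* Φ K_RFF = Φ* Ψ'`. -/
theorem rff_koopman_normal_equation {N R : ℕ}
    (Φ Ψ' : Matrix (Fin N) (Fin R) ℂ)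
    (hΦ : LinearIndependent ℂ (fun j : Fin R => fun i : Fin N => Φ i j))
    (K : Matrix (Fin N) (Fin N) ℂ)
    (hK : (Φ * Φᴴ) * K = Ψ' * Φᴴ)
    (P : Matrix (Fin N) (Fin R) ℂ)
    (hP : IsMoorePenroseInverse Φᴴ P) :
    Φᴴ * Φ * (Φᴴ * K * P) = Φᴴ * Ψ' := by
  obtain ⟨h₁, -, h₃, -⟩ := hP
  have hright : Φᴴ * P = 1 := conjTranspose_mul_eq_one_of_penrose hΦ h₁ h₃
  calc Φᴴ * Φ * (Φᴴ * K * P) = Φᴴ * (Φ * Φᴴ * K) * P := by simp only [Matrix.mul_assoc]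
    _ = Φᴴ * Ψ' * (Φᴴ * P) := by rw [hK]; simp only [Matrix.mul_assoc]
    _ = Φᴴ * Ψ' := by rw [hright, Matrix.mul_one]
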